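/- arXiv:2401.06892 — 3 statements merged into one kernel-verified Lean document; each statement's English description precedes it below -/
import Mathlib

section
/- Fix a real number p > 1 and parameters t > 0, ρ > t. Let E_p be the matrix on ℓ²(ℕ₀) with entries E_p(j,k) = p^(−(ρ+t)j/2)·p^(t·max(j,k))·p^(−(ρ+t)k/2), let ψ ∈ ℓ²(ℕ₀) have coordinates ψ_k = p^(−(ρ−t)k/2), and let T be the upper triangular matrix with T(j,k) = p^(−tj/2)·p^(−(ρ−t)k/2) for k ≥ j and 0 otherwise. Then E_p = −(p^t − 1)·T*T + p^t·⟨·,ψ⟩ψ as operators on ℓ²(ℕ₀). -/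
open Real

/-- The entries of the matrix `E_p`. -/
noncomputable def Ep (p t ρ : ℝ) (j k : ℕ) : ℝ :=
  p ^ (-(ρ + t) * j / 2) * p ^ (t * (max j k : ℕ)) * p ^ (-(ρ + t) * k / 2)

/-- The entries of the upper triangular matrix `T`. -/
noncomputable def Tmat (p t ρ : ℝ) (j k : ℕ) : ℝ :=
  if j ≤ k then p ^ (-(t * j) / 2) * p ^ (-((ρ - t) * k) / 2) else 0

/-- The coordinates of the vector `ψ`. -/
noncomputable def psi (p t ρ : ℝ) (k : ℕ) : ℝ := p ^ (-((ρ - t) * k) / 2)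

/-- `E_p = -(p^t - 1) T*T + p^t ⟨·,ψ⟩ψ`, expressed entrywise: the `(j,k)` entry of the
rank-one operator `⟨·,ψ⟩ψ` is `ψ_j ψ_k` and the `(j,k)` entry of `T*T` is
`∑_ℓ T(ℓ,j) T(ℓ,k)`. -/
theorem Ep_factorisation (p t ρ : ℝ) (hp : 1 < p) (ht : 0 < t) (hρ : t < ρ) (j k : ℕ) :
    Ep p t ρ j k
      = -(p ^ t - 1) * (∑' ℓ : ℕ, Tmat p t ρ ℓ j * Tmat p t ρ ℓ k)
        + p ^ t * (psi p t ρ j * psi p t ρ k) := by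
  have hp0 : (0:ℝ) < p := lt_trans one_pos hp
  set m := min j k with hm
  set r := p ^ (-t) with hr
  have hrlt : r < 1 := rpow_lt_one_of_one_lt_of_neg hp (by linarith)
  have hrne : r - 1 ≠ 0 := by
    intro h
    have : r = 1 := by linarith
    linarith
  have hptr : p ^ t * r = 1 := by
    rw [hr, ← rpow_add hp0]
    simp
  have hmul : ∀ a b : ℝ, p ^ a * p ^ b = p ^ (a + b) := fun a b => (rpow_add hp0 a b).symm
  have hsum : (∑' ℓ : ℕ, Tmat p t ρ ℓ j * Tmat p t ρ ℓ k)
      = (∑ ℓ ∈ Finset.range (m + 1), r ^ ℓ) * (psi p t ρ j * psi p t ρ k) := by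
    rw [tsum_eq_sum (s := Finset.range (m + 1)) ?_]
    · rw [Finset.sum_mul]
      apply Finset.sum_congr rfl
      intro ℓ hℓ
      have hℓm : ℓ ≤ m := Nat.lt_succ_iff.mp (Finset.mem_range.mp hℓ)
      rw [Tmat, Tmat, if_pos (hℓm.trans (min_le_left _ _)),
        if_pos (hℓm.trans (min_le_right _ _)), psi, psi, hr,
        ← rpow_natCast (p ^ (-t)) ℓ, ← rpow_mul hp0.le]
      simp only [hmul]
      congr 1
      ring
    · intro ℓ hℓ
      have hℓm : m < ℓ := Nat.lt_of_succ_le (Nat.succ_le_of_lt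
        (Nat.lt_of_not_le (fun h => hℓ (Finset.mem_range.mpr (Nat.lt_succ_of_le h)))))
      rcases lt_or_ge j k with h | h
      · have : ¬ ℓ ≤ j := by omega
        rw [Tmat, if_neg this, zero_mul]
      · have : ¬ ℓ ≤ k := by omega
        rw [Tmat, Tmat, if_neg (by omega : ¬ ℓ ≤ k), mul_zero]
  rw [hsum, geom_sum_eq (by intro h; exact hrne (by rw [h]; ring))]
  have key : Ep p t ρ j k = p ^ t * r ^ (m + 1) * (psi p t ρ j * psi p t ρ k) := by
    have hmm : ((m : ℕ) : ℝ) + ((max j k : ℕ) : ℝ) = (j : ℝ) + (k : ℝ) := by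
      rw [hm]; exact_mod_cast (min_add_max j k)
    rw [Ep, psi, psi, hr, ← rpow_natCast (p ^ (-t)) (m + 1), ← rpow_mul hp0.le]
    simp only [hmul]
    congr 1
    push_cast at hmm ⊢
    linear_combination t * hmm
  rw [key]
  field_simp
  ring_nf
  linear_combination (r * r ^ m - 1) * psi p t ρ j * psi p t ρ k * hptr
end

section
/- Fix p > 1, t > 0, ρ > t. The operator E_p on ℓ²(ℕ₀) with entries E_p(j,k) = p^(−(ρ+t)j/2)·p^(t·max(j,k))·p^(−(ρ+t)k/2) has a trivial kernel: if E_p x = 0 for x ∈ ℓ²(ℕ₀), then x = 0. -/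
open Real

/-- `E_p`, as an operator on `ℓ²(ℕ₀)`, has a trivial kernel. -/
theorem Ep_trivial_kernel (p t ρ : ℝ) (hp : 1 < p) (ht : 0 < t) (hρ : t < ρ)
    (A : lp (fun _ : ℕ => ℝ) 2 →L[ℝ] lp (fun _ : ℕ => ℝ) 2)
    (hA : ∀ (x : lp (fun _ : ℕ => ℝ) 2) (j : ℕ),
      (A x : ℕ → ℝ) j = ∑' k : ℕ, Ep p t ρ j k * (x : ℕ → ℝ) k)
    (x : lp (fun _ : ℕ => ℝ) 2) (hx : A x = 0) : x = 0 := by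
  classical
  have hp0 : (0:ℝ) < p := lt_trans one_pos hp
  set X : ℕ → ℝ := (x : ℕ → ℝ) with hX
  set y : ℕ → ℝ := fun k => p ^ (-(ρ + t) * k / 2) * X k with hy
  have hxb : ∀ k, |X k| ≤ ‖x‖ := by
    intro k
    simpa using lp.norm_apply_le_norm (by norm_num) x k
  -- summability of `g k = p^(t k) * y k`
  set g : ℕ → ℝ := fun k => p ^ (t * k) * y k with hg
  have hgeq : ∀ k : ℕ, |g k| = p ^ ((t - ρ) * k / 2) * |X k| := by
    intro k
    have : g k = p ^ ((t - ρ) * k / 2) * X k := by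
      simp only [hg, hy]
      rw [← mul_assoc, ← Real.rpow_add hp0]
      ring_nf
    rw [this, abs_mul, abs_of_pos (Real.rpow_pos_of_pos hp0 _)]
  have hgabs : Summable fun k => |g k| := by
    have hr1 : p ^ ((t - ρ) / 2) < 1 :=
      Real.rpow_lt_one_of_one_lt_of_neg hp (by linarith)
    have hr0 : (0:ℝ) ≤ p ^ ((t - ρ) / 2) := (Real.rpow_pos_of_pos hp0 _).le
    refine Summable.of_nonneg_of_le (fun k => abs_nonneg _) (fun k => ?_)
      ((summable_geometric_of_lt_one hr0 hr1).mul_right ‖x‖)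
    rw [hgeq k]
    have h1 : p ^ ((t - ρ) * k / 2) = (p ^ ((t - ρ) / 2)) ^ k := by
      rw [← Real.rpow_natCast (p ^ ((t - ρ) / 2)) k, ← Real.rpow_mul hp0.le]
      ring_nf
    rw [h1]
    exact mul_le_mul_of_nonneg_left (hxb k) (by positivity)
  have hgsum : Summable g := summable_abs_iff.mp hgabs
  -- summability of rows
  have hsum : ∀ j : ℕ, Summable fun k => p ^ (t * (max j k : ℕ)) * y k := by
    intro j
    rw [← summable_abs_iff]
    refine Summable.of_nonneg_of_le (fun k => abs_nonneg _) (fun k => ?_)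
      (hgabs.mul_left (p ^ (t * j)))
    have hle : p ^ (t * (max j k : ℕ)) ≤ p ^ (t * j) * p ^ (t * k) := by
      rw [← Real.rpow_add hp0]
      apply Real.rpow_le_rpow_left_iff hp |>.mpr
      have : ((max j k : ℕ) : ℝ) ≤ (j : ℝ) + k := by
        have := max_le_add_of_nonneg (Nat.zero_le j) (Nat.zero_le k)
        exact_mod_cast this
      nlinarith [ht.le]
    calc |p ^ (t * (max j k : ℕ)) * y k|
        = p ^ (t * (max j k : ℕ)) * |y k| := by
          rw [abs_mul, abs_of_pos (Real.rpow_pos_of_pos hp0 _)]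
      _ ≤ (p ^ (t * j) * p ^ (t * k)) * |y k| :=
          mul_le_mul_of_nonneg_right hle (abs_nonneg _)
      _ = p ^ (t * j) * |g k| := by
          rw [hg]
          simp only [abs_mul, abs_of_pos (Real.rpow_pos_of_pos hp0 (t * (k:ℝ)))]
          ring
  -- the row equations
  have hT : ∀ j : ℕ, ∑' k, p ^ (t * (max j k : ℕ)) * y k = 0 := by
    intro j
    have h0 : (A x : ℕ → ℝ) j = 0 := by rw [hx]; rfl
    rw [hA x j] at h0
    have heq : ∀ k : ℕ, Ep p t ρ j k * X k
        = p ^ (-(ρ + t) * j / 2) * (p ^ (t * (max j k : ℕ)) * y k) := by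
      intro k
      simp only [Ep, hy]
      ring
    rw [show (∑' k : ℕ, Ep p t ρ j k * X k)
        = ∑' k : ℕ, p ^ (-(ρ + t) * j / 2) * (p ^ (t * (max j k : ℕ)) * y k) from
        tsum_congr heq, tsum_mul_left] at h0
    have hne : p ^ (-(ρ + t) * (j:ℝ) / 2) ≠ 0 := (Real.rpow_pos_of_pos hp0 _).ne'
    exact (mul_eq_zero.mp h0).resolve_left hne
  -- decompose: p^(t j) * (partial sum) + tail = 0
  set Q : ℕ → ℝ := fun j => ∑' i, g (i + (j + 1)) with hQdef
  set P : ℕ → ℝ := fun j => ∑ k ∈ Finset.range (j + 1), y k with hPdef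
  have hkey : ∀ j : ℕ, p ^ (t * j) * P j + Q j = 0 := by
    intro j
    have hdec := Summable.sum_add_tsum_nat_add (f := fun k => p ^ (t * (max j k : ℕ)) * y k)
      (j + 1) (hsum j)
    rw [hT j] at hdec
    have h1 : ∑ k ∈ Finset.range (j + 1), p ^ (t * (max j k : ℕ)) * y k
        = p ^ (t * j) * P j := by
      rw [hPdef, Finset.mul_sum]
      refine Finset.sum_congr rfl fun k hk => ?_
      have hkj : max j k = j := max_eq_left (Nat.lt_succ_iff.mp (Finset.mem_range.mp hk))
      rw [hkj]
    have h2 : ∑' i : ℕ, p ^ (t * (max j (i + (j + 1)) : ℕ)) * y (i + (j + 1)) = Q j := by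
      refine tsum_congr fun i => ?_
      have : max j (i + (j + 1)) = i + (j + 1) := max_eq_right (by omega)
      rw [this]
    rw [h1, h2] at hdec
    exact hdec
  -- tail recursion : Q j = g (j+1) + Q (j+1)
  have hQrec : ∀ j : ℕ, Q j = g (j + 1) + Q (j + 1) := by
    intro j
    have hs : Summable fun i => g (i + (j + 1)) := (summable_nat_add_iff (j + 1)).mpr hgsum
    have h := Summable.tsum_eq_zero_add hs
    simp only [zero_add] at h
    calc Q j = ∑' i, g (i + (j + 1)) := rfl
      _ = g (j + 1) + ∑' i, g (i + 1 + (j + 1)) := h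
      _ = g (j + 1) + Q (j + 1) := by
          congr 1
          exact tsum_congr fun i => by congr 1; omega
  -- partial sums vanish
  have hP0 : ∀ j : ℕ, P j = 0 := by
    intro j
    have e1 := hkey j
    have e2 := hkey (j + 1)
    have ePs : P (j + 1) = P j + y (j + 1) := Finset.sum_range_succ y (j + 1)
    have eg : g (j + 1) = p ^ (t * ((j:ℝ) + 1)) * y (j + 1) := by
      simp only [hg]
      push_cast
      ring_nf
    have hcast : ((j + 1 : ℕ) : ℝ) = (j : ℝ) + 1 := by push_cast; ring
    rw [hQrec j, eg] at e1
    rw [ePs, hcast] at e2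
    have hne : p ^ (t * ((j:ℝ) + 1)) - p ^ (t * (j:ℝ)) ≠ 0 := by
      have : p ^ (t * (j:ℝ)) < p ^ (t * ((j:ℝ) + 1)) :=
        (Real.rpow_lt_rpow_left_iff hp).mpr (by nlinarith)
      linarith
    have : (p ^ (t * ((j:ℝ) + 1)) - p ^ (t * (j:ℝ))) * P j = 0 := by linarith
    exact (mul_eq_zero.mp this).resolve_left hne
  have hy0 : ∀ k, y k = 0 := by
    intro k
    induction k with
    | zero =>
      have := hP0 0
      simpa [hPdef] using this
    | succ n ih =>
      have h1 := hP0 (n + 1)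
      have h2 := hP0 n
      simp only [hPdef, Finset.sum_range_succ] at h1 h2
      linarith
  have hX0 : ∀ k, X k = 0 := by
    intro k
    have := hy0 k
    rw [hy] at this
    simp only at this
    have hne : p ^ (-(ρ + t) * (k:ℝ) / 2) ≠ 0 := (Real.rpow_pos_of_pos hp0 _).ne'
    exact (mul_eq_zero.mp this).resolve_left hne
  apply lp.ext
  funext k
  simpa using hX0 k
end

section
/- Fix p > 1, t > 0, ρ > t + 1. Let λ₀⁻(E_p) ≥ λ₁⁻(E_p) ≥ … denote the absolute values of the negative eigenvalues of E_p listed in non-increasing order. Then for every k ≥ 1, λ_k⁻(E_p) ≤ p^(−ρk)·λ₀⁻(E_p). -/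
/-!
The kernel `Ep` is dominated by the rank-one kernel `r ^ j * r ^ k` with
`r = p ^ (-(ρ - t) / 2) < 1`, so `A` is a compact self-adjoint operator on `ℓ²`, and by the
spectral theorem its quadratic form is bounded below by `-μ 0 * ‖x‖ ^ 2`. The eigenspaces for
`-μ 0, …, -μ k` span a space of dimension at least `k + 1` on which the form is at most
`-μ k * ‖x‖ ^ 2`, so it contains some `y ≠ 0` whose first `k` coordinates vanish. Deleting the
first `k` rows and columns of `E_p` gives `p ^ (-(ρ * k)) * E_p`, so shifting `y` by `k` places
keeps its norm and multiplies the form by `p ^ (ρ * k)`; comparing the two bounds gives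
`p ^ (ρ * k) * μ k ≤ μ 0`.
-/

open Real

open Filter Module Module.End
open scoped lp

section RealSequences

variable {ι : Type*}

theorem lp.hasSum_sq (x : ℓ²(ι, ℝ)) : HasSum (fun i => x i ^ 2) (‖x‖ ^ 2) := by
  simpa using lp.hasSum_norm (p := 2) (by norm_num) x

theorem lp.real_inner_eq_tsum (x y : ℓ²(ι, ℝ)) : inner ℝ x y = ∑' i, x i * y i := by
  simp [lp.inner_eq_tsum, mul_comm]

theorem lp.summable_abs_mul (x y : ℓ²(ι, ℝ)) : Summable fun i => |x i| * |y i| := by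
  simpa using lp.summable_mul (p := 2) (q := 2) (by simpa using .two_two) x y

theorem lp.tsum_abs_mul_le (x y : ℓ²(ι, ℝ)) : ∑' i, |x i| * |y i| ≤ ‖x‖ * ‖y‖ := by
  simpa using lp.tsum_mul_le_mul_norm' (p := 2) (q := 2) (by simpa using .two_two) x y

end RealSequences

def lpShift (n : ℕ) (y : ℓ²(ℕ, ℝ)) : ℓ²(ℕ, ℝ) :=
  ⟨fun j => y (j + n), show Memℓp _ 2 from memℓp_gen_iff (by norm_num) |>.mpr <|
    (summable_nat_add_iff n).mpr ((memℓp_gen_iff (by norm_num)).mp (lp.memℓp y))⟩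

@[simp] theorem lpShift_apply (n : ℕ) (y : ℓ²(ℕ, ℝ)) (j : ℕ) : lpShift n y j = y (j + n) := rfl

noncomputable def geometricLp (r : ℝ) (hr : |r| < 1) : ℓ²(ℕ, ℝ) :=
  ⟨fun j => r ^ j, show Memℓp _ 2 from (memℓp_gen_iff (by norm_num)).mpr <| by
    refine (summable_geometric_of_lt_one (sq_nonneg r) ((sq_lt_one_iff_abs_lt_one r).mpr hr)).congr
      fun i => ?_
    rw [ENNReal.toReal_ofNat, Real.rpow_two, Real.norm_eq_abs, sq_abs, ← pow_mul, ← pow_mul,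
      mul_comm]⟩

theorem tsum_nat_add_eq_of_lt_eq_zero {f : ℕ → ℝ} {n : ℕ} (hf : ∀ i < n, f i = 0) :
    ∑' j, f (j + n) = ∑' j, f j :=
  (add_left_injective n).tsum_eq fun i hi => by
    obtain ⟨j, rfl⟩ := Nat.exists_eq_add_of_le (not_lt.mp fun h => hi (hf i h))
    exact ⟨j, add_comm j n⟩

theorem norm_lpShift {n : ℕ} {y : ℓ²(ℕ, ℝ)} (hy : ∀ i < n, y i = 0) : ‖lpShift n y‖ = ‖y‖ := by
  have h := (lp.hasSum_sq (lpShift n y)).tsum_eq.symm.trans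
    ((tsum_nat_add_eq_of_lt_eq_zero (f := fun i => y i ^ 2) (n := n)
      fun i hi => by simp [hy i hi]).trans (lp.hasSum_sq y).tsum_eq)
  exact (pow_left_inj₀ (norm_nonneg _) (norm_nonneg _) two_ne_zero).mp h

theorem exists_ne_zero_mem_forall_lt_eq_zero (V : Submodule ℝ ℓ²(ℕ, ℝ)) {n : ℕ}
    (hn : n < finrank ℝ V) : ∃ y ∈ V, y ≠ 0 ∧ ∀ i < n, y i = 0 := by
  have := Module.finite_of_finrank_pos (n.zero_le.trans_lt hn)
  let f : V →ₗ[ℝ] (Fin n → ℝ) :=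
    LinearMap.pi fun i : Fin n => (lp.evalₗ (𝕜 := ℝ) (fun _ : ℕ => ℝ) 2 i).comp V.subtype
  obtain ⟨y, hy, hy0⟩ := Submodule.exists_mem_ne_zero_of_ne_bot
    (LinearMap.ker_ne_bot_of_finrank_lt (f := f) (by simpa using hn))
  refine ⟨y, y.2, by simpa using hy0, fun i hi => ?_⟩
  simpa [f] using congrFun (LinearMap.mem_ker.mp hy) ⟨i, hi⟩

section Compact

variable {T : ℓ²(ℕ, ℝ) →L[ℝ] ℓ²(ℕ, ℝ)}

noncomputable def lpTruncation (T : ℓ²(ℕ, ℝ) →L[ℝ] ℓ²(ℕ, ℝ)) (n : ℕ) :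
    ℓ²(ℕ, ℝ) →L[ℝ] ℓ²(ℕ, ℝ) :=
  ∑ i ∈ Finset.range n, (lp.singleContinuousLinearMap ℝ _ 2 i).comp ((lp.evalCLM ℝ _ 2 i).comp T)

theorem isCompactOperator_lpTruncation (T : ℓ²(ℕ, ℝ) →L[ℝ] ℓ²(ℕ, ℝ)) (n : ℕ) :
    IsCompactOperator (lpTruncation T n) :=
  Submodule.sum_mem (compactOperator _ _ _) fun i _ =>
    (isCompactOperator_of_locallyCompactSpace_dom _).clm_comp (lp.singleContinuousLinearMap ℝ _ 2 i)

theorem lpTruncation_apply (T : ℓ²(ℕ, ℝ) →L[ℝ] ℓ²(ℕ, ℝ)) (n : ℕ) (x : ℓ²(ℕ, ℝ)) (j : ℕ) :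
    lpTruncation T n x j = if j < n then T x j else 0 := by
  rw [lpTruncation, sum_apply, lp.coeFn_sum]
  simp [lp.evalCLM, Pi.single_apply]

theorem norm_sub_lpTruncation_le (T : ℓ²(ℕ, ℝ) →L[ℝ] ℓ²(ℕ, ℝ)) (a : ℓ²(ℕ, ℝ)) {C : ℝ}
    (hT : ∀ x j, |T x j| ≤ |a j| * (C * ‖x‖)) (n : ℕ) :
    ‖T - lpTruncation T n‖ ≤ |C| * √(∑' j, a (j + n) ^ 2) := by
  refine (T - lpTruncation T n).opNorm_le_bound (by positivity) fun x => ?_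
  have htail : Summable fun j => a (j + n) ^ 2 :=
    (summable_nat_add_iff n).mpr (lp.hasSum_sq a).summable
  have hsq : ‖(T - lpTruncation T n) x‖ ^ 2 ≤ (|C| * √(∑' j, a (j + n) ^ 2) * ‖x‖) ^ 2 := calc
    _ = ∑' j, (T x (j + n)) ^ 2 := by
      rw [← (lp.hasSum_sq _).tsum_eq, ← tsum_nat_add_eq_of_lt_eq_zero (n := n)]
      · simp [lpTruncation_apply]
      · intro i hi; simp [lpTruncation_apply, hi]
    _ ≤ ∑' j, a (j + n) ^ 2 * (C * ‖x‖) ^ 2 := by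
      refine ((summable_nat_add_iff n).mpr (lp.hasSum_sq (T x)).summable).tsum_le_tsum
        (fun j => ?_) (htail.mul_right _)
      rw [← mul_pow, ← sq_abs, ← sq_abs (a _ * _), abs_mul]
      exact pow_le_pow_left₀ (abs_nonneg _) ((hT x _).trans (by gcongr; exact le_abs_self _)) 2
    _ = _ := by
      rw [tsum_mul_right, mul_pow, mul_pow, mul_pow, sq_abs,
        Real.sq_sqrt (tsum_nonneg fun _ => sq_nonneg _)]
      ring
  exact (pow_le_pow_iff_left₀ (norm_nonneg _) (by positivity) two_ne_zero).mp hsq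

theorem isCompactOperator_of_abs_apply_le (a : ℓ²(ℕ, ℝ)) (C : ℝ)
    (hT : ∀ x j, |T x j| ≤ |a j| * (C * ‖x‖)) : IsCompactOperator T := by
  refine isCompactOperator_of_tendsto (l := atTop) (tendsto_iff_norm_sub_tendsto_zero.mpr ?_)
    (.of_forall (isCompactOperator_lpTruncation T))
  have htail := tendsto_sum_nat_add fun j => a j ^ 2
  refine squeeze_zero (fun _ => norm_nonneg _) (fun n => (norm_sub_rev _ _).trans_le
    (norm_sub_lpTruncation_le T a hT n)) ?_
  simpa using ((continuous_sqrt.tendsto 0).comp htail).const_mul |C|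

end Compact

section Kernel

variable {K : ℕ → ℕ → ℝ} {a : ℓ²(ℕ, ℝ)} {T : ℓ²(ℕ, ℝ) →L[ℝ] ℓ²(ℕ, ℝ)}

theorem abs_kernel_mul_le (hK : ∀ j k, |K j k| ≤ |a j| * |a k|) (x : ℓ²(ℕ, ℝ)) (j k : ℕ) :
    |K j k * x k| ≤ |a j| * (|a k| * |x k|) := by
  rw [abs_mul, ← mul_assoc]
  exact mul_le_mul_of_nonneg_right (hK j k) (abs_nonneg _)

theorem abs_tsum_kernel_mul_le (hK : ∀ j k, |K j k| ≤ |a j| * |a k|) (x : ℓ²(ℕ, ℝ)) (j : ℕ) :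
    |∑' k, K j k * x k| ≤ |a j| * (‖a‖ * ‖x‖) := calc
  _ ≤ ∑' k, |a j| * (|a k| * |x k|) :=
    (Real.norm_eq_abs _).symm.trans_le <| tsum_of_norm_bounded
      ((lp.summable_abs_mul a x).mul_left _).hasSum (abs_kernel_mul_le hK x j)
  _ ≤ |a j| * (‖a‖ * ‖x‖) := by
    rw [tsum_mul_left]
    exact mul_le_mul_of_nonneg_left (lp.tsum_abs_mul_le a x) (abs_nonneg _)

theorem isSymmetric_of_kernel (hK : ∀ j k, |K j k| ≤ |a j| * |a k|) (hKsymm : ∀ j k, K j k = K k j)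
    (hT : ∀ x j, T x j = ∑' k, K j k * x k) : (T : ℓ²(ℕ, ℝ) →ₗ[ℝ] ℓ²(ℕ, ℝ)).IsSymmetric := by
  intro x y
  let f : ℕ → ℕ → ℝ := fun j k => K j k * x k * y j
  have hprod : Summable (Function.uncurry f) := by
    refine .of_norm_bounded (((lp.summable_abs_mul a y).mul_of_nonneg (lp.summable_abs_mul a x)
      (fun _ => by positivity) fun _ => by positivity)) fun jk => ?_
    simp only [Function.uncurry, f, Real.norm_eq_abs, abs_mul (K _ _ * _)]
    nlinarith [abs_kernel_mul_le hK x jk.1 jk.2, abs_nonneg (y jk.1), abs_nonneg (a jk.1)]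
  calc inner ℝ (T x) y = ∑' j, ∑' k, f j k := by
        simp only [lp.real_inner_eq_tsum, hT, f, tsum_mul_right]
    _ = ∑' k, ∑' j, f j k :=
        (hprod.tsum_comm' hprod.prod_factor hprod.prod_symm.prod_factor).symm
    _ = inner ℝ x (T y) := by
        simp only [lp.real_inner_eq_tsum, hT, f, ← tsum_mul_left]
        exact tsum_congr fun k => tsum_congr fun j => by rw [hKsymm]; ring

theorem isCompactOperator_of_kernel (hK : ∀ j k, |K j k| ≤ |a j| * |a k|)
    (hT : ∀ x j, T x j = ∑' k, K j k * x k) : IsCompactOperator T :=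
  isCompactOperator_of_abs_apply_le a ‖a‖ fun x j => (hT x j).symm ▸ abs_tsum_kernel_mul_le hK x j

theorem inner_map_self_eq_mul_inner_lpShift
    (hT : ∀ x j, T x j = ∑' k, K j k * x k) {n : ℕ} {c : ℝ}
    (hK : ∀ j k, K (j + n) (k + n) = c * K j k) {y : ℓ²(ℕ, ℝ)} (hy : ∀ i < n, y i = 0) :
    inner ℝ y (T y) = c * inner ℝ (lpShift n y) (T (lpShift n y)) := by
  have hTy (j : ℕ) : T y (j + n) = c * T (lpShift n y) j := by
    rw [hT, hT, ← tsum_nat_add_eq_of_lt_eq_zero (n := n) fun i hi => by simp [hy i hi],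
      ← tsum_mul_left]
    exact tsum_congr fun k => by rw [hK, lpShift_apply, mul_assoc]
  rw [lp.real_inner_eq_tsum, lp.real_inner_eq_tsum,
    ← tsum_nat_add_eq_of_lt_eq_zero (n := n) fun i hi => by simp [hy i hi], ← tsum_mul_left]
  exact tsum_congr fun j => by rw [hTy, lpShift_apply]; ring

end Kernel

theorem finrank_biSup_eq_sum {K M ι : Type*} [DivisionRing K] [AddCommGroup M] [Module K M]
    {V : ι → Submodule K M} (hV : iSupIndep V) (s : Finset ι)
    (hfin : ∀ i ∈ s, FiniteDimensional K (V i)) :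
    finrank K ↥(⨆ i ∈ s, V i) = ∑ i ∈ s, finrank K (V i) := by
  classical
  induction s using Finset.induction_on with
  | empty => rw [show ⨆ i ∈ (∅ : Finset ι), V i = ⊥ by simp, finrank_bot, Finset.sum_empty]
  | insert i s hi ih =>
    have : ∀ j : s, FiniteDimensional K (V j) := fun j => hfin j (by simp)
    have : FiniteDimensional K (V i) := hfin i (by simp)
    have : FiniteDimensional K ↥(⨆ j ∈ s, V j) := by
      rw [iSup_subtype']; infer_instance
    have hdisj : V i ⊓ ⨆ j ∈ s, V j = ⊥ := (hV.disjoint_biSup hi).eq_bot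
    have := Submodule.finrank_sup_add_finrank_inf_eq (V i) (⨆ j ∈ s, V j)
    rw [hdisj, finrank_bot, add_zero] at this
    rw [Finset.iSup_insert, this, Finset.sum_insert hi, ih fun j hj => hfin j (by simp [hj])]

section Spectral

variable {E : Type*} [NormedAddCommGroup E] [InnerProductSpace ℝ E]

variable {T : E →ₗ[ℝ] E}

theorem LinearMap.IsSymmetric.inner_sum_eigenvectors (hT : T.IsSymmetric) (s : Finset ℝ)
    (v : (μ : ℝ) → eigenspace T μ) :
    inner ℝ (∑ μ ∈ s, (v μ : E)) (T (∑ μ ∈ s, v μ)) = ∑ μ ∈ s, μ * ‖(v μ : E)‖ ^ 2 := by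
  have hTv : T (∑ μ ∈ s, v μ) = ∑ μ ∈ s, ((μ • v μ : eigenspace T μ) : E) := by
    simp [map_sum, mem_eigenspace_iff.mp (v _).2]
  rw [hTv]
  simpa [real_inner_smul_right, real_inner_self_eq_norm_sq] using
    hT.orthogonalFamily_eigenspaces.inner_sum v (fun μ => μ • v μ) s

theorem LinearMap.IsSymmetric.norm_sum_eigenvectors_sq (hT : T.IsSymmetric) (s : Finset ℝ)
    (v : (μ : ℝ) → eigenspace T μ) : ‖∑ μ ∈ s, (v μ : E)‖ ^ 2 = ∑ μ ∈ s, ‖(v μ : E)‖ ^ 2 := by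
  simpa using hT.orthogonalFamily_eigenspaces.norm_sum v s

theorem LinearMap.IsSymmetric.inner_map_self_le_of_mem_biSup (hT : T.IsSymmetric) {s : Finset ℝ}
    {c : ℝ} (hs : ∀ μ ∈ s, μ ≤ c) {x : E} (hx : x ∈ ⨆ μ ∈ s, eigenspace T μ) :
    inner ℝ x (T x) ≤ c * ‖x‖ ^ 2 := by
  obtain ⟨v, rfl⟩ := (Submodule.mem_iSup_finset_iff_exists_sum _ x).mp hx
  rw [hT.inner_sum_eigenvectors, hT.norm_sum_eigenvectors_sq, Finset.mul_sum]
  exact Finset.sum_le_sum fun μ hμ => mul_le_mul_of_nonneg_right (hs μ hμ) (sq_nonneg _)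

theorem LinearMap.IsSymmetric.le_inner_map_self_of_mem_iSup (hT : T.IsSymmetric) {c : ℝ}
    (hc : ∀ μ, HasEigenvalue T μ → c ≤ μ) {x : E} (hx : x ∈ ⨆ μ, eigenspace T μ) :
    c * ‖x‖ ^ 2 ≤ inner ℝ x (T x) := by
  obtain ⟨s, hxs⟩ := Submodule.mem_iSup_iff_exists_finset.mp hx
  obtain ⟨v, rfl⟩ := (Submodule.mem_iSup_finset_iff_exists_sum _ x).mp hxs
  rw [hT.inner_sum_eigenvectors, hT.norm_sum_eigenvectors_sq, Finset.mul_sum]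
  refine Finset.sum_le_sum fun μ _ => ?_
  by_cases hv : (v μ : E) = 0
  · simp [hv]
  · exact mul_le_mul_of_nonneg_right (hc μ (hasEigenvalue_of_hasEigenvector ⟨(v μ).2, hv⟩))
      (sq_nonneg _)

/-- By the spectral theorem the eigenvectors of a compact self-adjoint operator span a dense
subspace. -/
theorem ContinuousLinearMap.le_inner_map_self_of_forall_hasEigenvalue [CompleteSpace E]
    {T : E →L[ℝ] E} (hTc : IsCompactOperator T) (hT : (T : E →ₗ[ℝ] E).IsSymmetric) {c : ℝ}
    (hc : ∀ μ, HasEigenvalue (T : E →ₗ[ℝ] E) μ → c ≤ μ) (x : E) :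
    c * ‖x‖ ^ 2 ≤ inner ℝ x (T x) := by
  have hdense : (⨆ μ, eigenspace (T : E →ₗ[ℝ] E) μ).topologicalClosure = ⊤ :=
    Submodule.topologicalClosure_eq_top_iff.mpr
      (T.orthogonalComplement_iSup_eigenspaces_eq_bot hTc hT)
  have hclosed : IsClosed {x : E | c * ‖x‖ ^ 2 ≤ inner ℝ x (T x)} :=
    isClosed_le (by fun_prop) (by fun_prop)
  have hsub := closure_minimal (fun y hy => hT.le_inner_map_self_of_mem_iSup hc hy) hclosed
  rw [← Submodule.topologicalClosure_coe, hdense] at hsub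
  exact hsub (Set.mem_univ x)

end Spectral

theorem le_finrank_biSup_eigenspace {K M : Type*} [Field K] [DecidableEq K] [AddCommGroup M]
    [Module K M] {T : End K M} {μ : ℕ → K} (heig : ∀ j, HasEigenvalue T (-μ j))
    (hfin : ∀ j, FiniteDimensional K (eigenspace T (-μ j)))
    (hmult : ∀ j, Nat.card {i | μ i = μ j} = finrank K (eigenspace T (-μ j))) (n : ℕ) :
    n ≤ finrank K ↥(⨆ ν ∈ (Finset.range n).image (fun j => -μ j), eigenspace T ν) := by
  rw [finrank_biSup_eq_sum (eigenspaces_iSupIndep T) _ fun ν hν => by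
    obtain ⟨j, -, rfl⟩ := Finset.mem_image.mp hν; exact hfin j]
  calc n = ∑ ν ∈ (Finset.range n).image (fun j => -μ j),
        ((Finset.range n).filter fun j => -μ j = ν).card := by
        simpa using Finset.card_eq_sum_card_image (fun j => -μ j) (Finset.range n)
    _ ≤ _ := Finset.sum_le_sum fun ν hν => ?_
  obtain ⟨j, -, rfl⟩ := Finset.mem_image.mp hν
  have hpos : finrank K (eigenspace T (-μ j)) ≠ 0 := Nat.one_le_iff_ne_zero.mp
    (Submodule.one_le_finrank_iff.mpr (hasEigenvalue_iff.mp (heig j)))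
  have : Finite {i | μ i = μ j} := Nat.finite_of_card_ne_zero (hmult j ▸ hpos)
  rw [← hmult j]
  have hsub : ↑((Finset.range n).filter fun i => -μ i = -μ j) ⊆ {i | μ i = μ j} :=
    fun i hi => by simpa using (Finset.mem_filter.mp hi).2
  rw [← Set.ncard_coe_finset, ← Nat.card_coe_set_eq]
  exact Nat.card_mono (Set.toFinite _) hsub

section Ep

variable {p t ρ : ℝ}

theorem Ep_comm (j k : ℕ) : Ep p t ρ j k = Ep p t ρ k j := by
  rw [Ep, Ep, max_comm]; ring

theorem Ep_eq_rpow (hp : 0 < p) (j k : ℕ) :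
    Ep p t ρ j k = p ^ (-(ρ + t) * j / 2 + t * (max j k : ℕ) + -(ρ + t) * k / 2) := by
  rw [Ep, Real.rpow_add hp, Real.rpow_add hp]

theorem Ep_add_add (hp : 0 < p) (j k n : ℕ) :
    Ep p t ρ (j + n) (k + n) = p ^ (-(ρ * n)) * Ep p t ρ j k := by
  rw [Ep_eq_rpow hp, Ep_eq_rpow hp, ← Real.rpow_add hp, max_add_add_right]
  push_cast
  ring_nf

theorem abs_Ep_le (hp : 1 ≤ p) (ht : 0 ≤ t) (j k : ℕ) :
    |Ep p t ρ j k| ≤ |(p ^ (-(ρ - t) / 2)) ^ j| * |(p ^ (-(ρ - t) / 2)) ^ k| := by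
  have hp0 : 0 < p := by linarith
  have hmax : ((max j k : ℕ) : ℝ) ≤ j + k := mod_cast max_le_add_of_nonneg j.zero_le k.zero_le
  rw [abs_of_pos (by unfold Ep; positivity), abs_of_pos (by positivity), abs_of_pos (by positivity),
    ← Real.rpow_natCast, ← Real.rpow_natCast, ← Real.rpow_mul hp0.le, ← Real.rpow_mul hp0.le,
    ← Real.rpow_add hp0, Ep_eq_rpow hp0]
  apply Real.rpow_le_rpow_of_exponent_le hp
  nlinarith

theorem exists_abs_Ep_le_mul (hp : 1 < p) (ht : 0 ≤ t) (htρ : t < ρ) :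
    ∃ a : ℓ²(ℕ, ℝ), ∀ j k, |Ep p t ρ j k| ≤ |a j| * |a k| := by
  have hr : |p ^ (-(ρ - t) / 2)| < 1 := by
    rw [abs_of_pos (by positivity)]
    exact Real.rpow_lt_one_of_one_lt_of_neg hp (by linarith)
  exact ⟨geometricLp _ hr, abs_Ep_le hp.le ht⟩

end Ep

/-- If `μ : ℕ → ℝ` lists the absolute values of the negative eigenvalues of `E_p` in
non-increasing order with multiplicities, then `λ_k⁻(E_p) ≤ p^(-ρk) λ₀⁻(E_p)` for `k ≥ 1`. -/
theorem Ep_negative_eigenvalue_decay (p t ρ : ℝ) (hp : 1 < p) (ht : 0 < t) (hρ : t + 1 < ρ)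
    (A : lp (fun _ : ℕ => ℝ) 2 →L[ℝ] lp (fun _ : ℕ => ℝ) 2)
    (hA : ∀ (x : lp (fun _ : ℕ => ℝ) 2) (j : ℕ),
      (A x : ℕ → ℝ) j = ∑' k : ℕ, Ep p t ρ j k * (x : ℕ → ℝ) k)
    (μ : ℕ → ℝ) (hmono : Antitone μ) (hpos : ∀ k, 0 < μ k)
    (henum : ∀ ν : ℝ, 0 < ν →
      (Module.End.HasEigenvalue
        (A : lp (fun _ : ℕ => ℝ) 2 →ₗ[ℝ] lp (fun _ : ℕ => ℝ) 2) (-ν) ↔ ∃ k, μ k = ν))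
    (hmult : ∀ ν : ℝ, 0 < ν →
      Nat.card {k : ℕ | μ k = ν}
        = Module.finrank ℝ
            (Module.End.eigenspace
              (A : lp (fun _ : ℕ => ℝ) 2 →ₗ[ℝ] lp (fun _ : ℕ => ℝ) 2) (-ν))) :
    ∀ k : ℕ, 1 ≤ k → μ k ≤ p ^ (-(ρ * k)) * μ 0 := by
  intro k _
  obtain ⟨a, hK⟩ := exists_abs_Ep_le_mul hp ht.le (by linarith : t < ρ)
  have hsymm := isSymmetric_of_kernel hK Ep_comm hA
  have hcomp := isCompactOperator_of_kernel hK hA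
  have hlow := A.le_inner_map_self_of_forall_hasEigenvalue hcomp hsymm (c := -μ 0) fun ν hν => by
    rcases le_or_gt 0 ν with hν0 | hν0
    · linarith [hpos 0]
    · obtain ⟨j, hj⟩ := (henum (-ν) (by linarith)).mp (by simpa using hν)
      linarith [hmono (Nat.zero_le j)]
  have hdim := le_finrank_biSup_eigenspace (fun j => (henum _ (hpos j)).mpr ⟨j, rfl⟩)
    (fun j => A.finite_dimensional_eigenspace hcomp _ (neg_ne_zero.mpr (hpos j).ne'))
    (fun j => hmult _ (hpos j)) (k + 1)
  obtain ⟨y, hyV, hy0, hyk⟩ := exists_ne_zero_mem_forall_lt_eq_zero _ hdim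
  have hup := hsymm.inner_map_self_le_of_mem_biSup (c := -μ k) (fun ν hν => by
    obtain ⟨j, hj, rfl⟩ := Finset.mem_image.mp hν
    exact neg_le_neg (hmono (Finset.mem_range_succ_iff.mp hj))) hyV
  rw [ContinuousLinearMap.coe_coe,
    inner_map_self_eq_mul_inner_lpShift hA (Ep_add_add (by linarith) · · k) hyk] at hup
  have hlowy := norm_lpShift hyk ▸ hlow (lpShift k y)
  have hy2 : 0 < ‖y‖ ^ 2 := by positivity
  have hpk : 0 < p ^ (-(ρ * k)) := by positivity
  nlinarith [mul_le_mul_of_nonneg_left hlowy hpk.le]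
end
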